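/- arXiv:2003.10893 — 9 statements merged into one kernel-verified Lean document; each statement's English description precedes it below -/
import Mathlib

section
/- For any real v with v < 0 or v > 1, the function f(x) = ((1-v) + v·x)·x^{-v} is strictly decreasing on the interval (1, ∞). -/
/-! The derivative of `x ↦ ((1 - v) + v x) x^(-v)` factors as `v (1 - v) (x - 1) x^(-v-1)`,
and `v (1 - v) < 0` exactly when `v ∉ [0, 1]`; so the derivative is negative on `(1, ∞)`. -/

open Set

lemma hasDerivAt_affine_mul_rpow_neg (v : ℝ) {x : ℝ} (hx : 0 < x) :
    HasDerivAt (fun x : ℝ => ((1 - v) + v * x) * x ^ (-v))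
      (v * (1 - v) * (x - 1) * x ^ (-v - 1)) x := by
  have haffine : HasDerivAt (fun x : ℝ => (1 - v) + v * x) v x := by
    simpa using ((hasDerivAt_id x).const_mul v).const_add (1 - v)
  have hpow : HasDerivAt (fun x : ℝ => x ^ (-v)) (-v * x ^ (-v - 1)) x :=
    Real.hasDerivAt_rpow_const (Or.inl hx.ne')
  have hsplit : x ^ (-v) = x * x ^ (-v - 1) := by
    simpa only [Real.rpow_one, add_sub_cancel] using Real.rpow_add hx 1 (-v - 1)
  refine (haffine.mul hpow).congr_deriv ?_
  rw [hsplit]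
  ring

lemma mul_one_sub_neg_of_lt_zero_or_one_lt {v : ℝ} (hv : v < 0 ∨ 1 < v) : v * (1 - v) < 0 := by
  rcases hv with hv | hv
  · exact mul_neg_of_neg_of_pos hv (by linarith)
  · exact mul_neg_of_pos_of_neg (by linarith) (by linarith)

theorem strictAntiOn_of_v_outside_unit_interval (v : ℝ) (hv : v < 0 ∨ 1 < v) :
    StrictAntiOn (fun x : ℝ => ((1 - v) + v * x) * x ^ (-v)) (Set.Ioi 1) := by
  have hderiv : ∀ x ∈ Ioi (1 : ℝ), HasDerivAt (fun x : ℝ => ((1 - v) + v * x) * x ^ (-v))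
      (v * (1 - v) * (x - 1) * x ^ (-v - 1)) x :=
    fun x hx => hasDerivAt_affine_mul_rpow_neg v (zero_lt_one.trans hx)
  refine strictAntiOn_of_hasDerivWithinAt_neg (f' := fun x => v * (1 - v) * (x - 1) * x ^ (-v - 1))
    (convex_Ioi 1)
    (fun x hx => (hderiv x hx).continuousAt.continuousWithinAt) ?_ ?_ <;> rw [interior_Ioi]
  · exact fun x hx => (hderiv x hx).hasDerivWithinAt
  · intro x (hx1 : 1 < x)
    exact mul_neg_of_neg_of_pos
      (mul_neg_of_neg_of_pos (mul_one_sub_neg_of_lt_zero_or_one_lt hv) (sub_pos.mpr hx1))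
      (Real.rpow_pos_of_pos (zero_lt_one.trans hx1) _)
end

section
/- Let 0 < m₂ ≤ a ≤ m₁ < M₁ ≤ b ≤ M₂ be positive reals and let v be real with v ∉ [0,1]. Then ((m₁^{1-v}·M₁^v)/((1-v)·m₁ + v·M₁)) · ((1-v)·a + v·b) ≤ a^{1-v}·b^v ≤ ((m₂^{1-v}·M₂^v)/((1-v)·m₂ + v·M₂)) · ((1-v)·a + v·b). -/
/-! Writing `t = b / a`, both weighted means are homogeneous of degree one, so
`(a ∇_v b) / (a ♯_v b) = (1 - v + v t) t^{-v}`. For `v ∉ (0, 1)` this function of `t` has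
derivative `v (1 - v) (t - 1) t^{-v-1} ≤ 0` on `[1, ∞)`, so the ratio of the means decreases as
`b / a` grows; the hypotheses place `b / a` between `M₁ / m₁` and `M₂ / m₂`. -/

open Real Set

theorem antitoneOn_arith_mul_rpow_neg {v : ℝ} (hv : v ≤ 0 ∨ 1 ≤ v) :
    AntitoneOn (fun t : ℝ => (1 - v + v * t) * t ^ (-v)) (Ici 1) := by
  have hderiv : ∀ t : ℝ, 0 < t → HasDerivAt (fun t : ℝ => (1 - v + v * t) * t ^ (-v))
      (v * (1 - v) * (t - 1) * t ^ (-v - 1)) t := by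
    intro t ht
    have hmean : HasDerivAt (fun t : ℝ => 1 - v + v * t) v t := by
      simpa using ((hasDerivAt_id t).const_mul v).const_add (1 - v)
    refine (hmean.mul (hasDerivAt_rpow_const (p := -v) (Or.inl ht.ne'))).congr_deriv ?_
    rw [rpow_sub_one ht.ne']
    field_simp
    ring
  apply antitoneOn_of_deriv_nonpos (convex_Ici 1)
  · exact fun t ht => (hderiv t (zero_lt_one.trans_le ht)).continuousAt.continuousWithinAt
  · rw [interior_Ici]
    exact fun t ht => (hderiv t (zero_lt_one.trans ht)).differentiableAt.differentiableWithinAt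
  · rw [interior_Ici]
    intro t (ht : 1 < t)
    rw [(hderiv t (zero_lt_one.trans ht)).deriv]
    have hvv : v * (1 - v) ≤ 0 := by rcases hv with h | h <;> nlinarith
    exact mul_nonpos_of_nonpos_of_nonneg
      (mul_nonpos_of_nonpos_of_nonneg hvv (sub_nonneg.mpr ht.le))
      (rpow_nonneg (zero_lt_one.trans ht).le _)

theorem rpow_mul_arith_le_rpow_mul_arith {v s t : ℝ} (hv : v ≤ 0 ∨ 1 ≤ v) (hs : 1 ≤ s)
    (hst : s ≤ t) : s ^ v * (1 - v + v * t) ≤ t ^ v * (1 - v + v * s) := by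
  have hs₀ : 0 < s := zero_lt_one.trans_le hs
  have ht₀ : 0 < t := hs₀.trans_le hst
  have h := antitoneOn_arith_mul_rpow_neg hv hs (hs.trans hst) hst
  simp only [rpow_neg ht₀.le, rpow_neg hs₀.le, ← div_eq_mul_inv] at h
  rw [div_le_div_iff₀ (rpow_pos_of_pos ht₀ v) (rpow_pos_of_pos hs₀ v)] at h
  linarith

theorem rpow_one_sub_mul_rpow_eq {a b : ℝ} (v : ℝ) (ha : 0 < a) (hb : 0 ≤ b) :
    a ^ (1 - v) * b ^ v = a * (b / a) ^ v := by
  rw [div_rpow hb ha.le, rpow_sub ha, rpow_one]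
  have := (rpow_pos_of_pos ha v).ne'
  field_simp

theorem one_sub_mul_add_mul_eq {a : ℝ} (v b : ℝ) (ha : a ≠ 0) :
    (1 - v) * a + v * b = a * (1 - v + v * (b / a)) := by
  field_simp

theorem geom_mul_arith_le_geom_mul_arith {v a b c d : ℝ} (hv : v ≤ 0 ∨ 1 ≤ v) (ha : 0 < a)
    (hab : a ≤ b) (hc : 0 < c) (hratio : b / a ≤ d / c) :
    a ^ (1 - v) * b ^ v * ((1 - v) * c + v * d)
      ≤ c ^ (1 - v) * d ^ v * ((1 - v) * a + v * b) := by
  have hb : 0 ≤ b := ha.le.trans hab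
  have hd : 0 ≤ d := by
    have h := (div_nonneg hb ha.le).trans hratio
    rwa [le_div_iff₀ hc, zero_mul] at h
  rw [rpow_one_sub_mul_rpow_eq v ha hb, rpow_one_sub_mul_rpow_eq v hc hd,
    one_sub_mul_add_mul_eq v d hc.ne', one_sub_mul_add_mul_eq v b ha.ne']
  have key := rpow_mul_arith_le_rpow_mul_arith hv ((one_le_div ha).mpr hab) hratio
  calc a * (b / a) ^ v * (c * (1 - v + v * (d / c)))
      = a * c * ((b / a) ^ v * (1 - v + v * (d / c))) := by ring
    _ ≤ a * c * ((d / c) ^ v * (1 - v + v * (b / a))) := by gcongr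
    _ = c * (d / c) ^ v * (a * (1 - v + v * (b / a))) := by ring

theorem geometric_arithmetic_ratio_bounds
    (m₁ m₂ M₁ M₂ a b v : ℝ)
    (hm₂ : 0 < m₂) (h1 : m₂ ≤ a) (h2 : a ≤ m₁) (h3 : m₁ < M₁) (h4 : M₁ ≤ b) (h5 : b ≤ M₂)
    (hv : v < 0 ∨ 1 < v)
    (hpos1 : 0 < (1 - v) * m₁ + v * M₁) (hpos2 : 0 < (1 - v) * m₂ + v * M₂) :
    (m₁ ^ (1 - v) * M₁ ^ v / ((1 - v) * m₁ + v * M₁)) * ((1 - v) * a + v * b)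
      ≤ a ^ (1 - v) * b ^ v ∧
    a ^ (1 - v) * b ^ v
      ≤ (m₂ ^ (1 - v) * M₂ ^ v / ((1 - v) * m₂ + v * M₂)) * ((1 - v) * a + v * b) := by
  have hv' : v ≤ 0 ∨ 1 ≤ v := hv.imp le_of_lt le_of_lt
  have ha : 0 < a := hm₂.trans_le h1
  have hm₁ : 0 < m₁ := ha.trans_le h2
  have hab : a ≤ b := h2.trans (h3.le.trans h4)
  constructor
  · rw [div_mul_eq_mul_div, div_le_iff₀ hpos1]
    exact geom_mul_arith_le_geom_mul_arith hv' hm₁ h3.le ha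
      (div_le_div₀ (ha.trans_le hab).le h4 ha h2)
  · rw [div_mul_eq_mul_div, le_div_iff₀ hpos2]
    exact geom_mul_arith_le_geom_mul_arith hv' ha hab hm₂
      (div_le_div₀ (hm₂.trans_le (h1.trans (hab.trans h5))).le h5 hm₂ h1)
end

section
/- Let a, b > 0 satisfy s·a ≤ b ≤ t·a for some 0 < s ≤ t, and let v ∈ [0,1]. Set ξ = max{((1-v)+v·s)/s^v, ((1-v)+v·t)/t^v}. Then (1/ξ)·((1-v)·a + v·b) ≤ a^{1-v}·b^v. -/
/-!
Dividing by `a` and writing `x = b / a ∈ [s, t]`, the claim becomes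
`(1 - v) + v x ≤ ξ x ^ v`. The difference `(1 - v) + v x - ξ x ^ v` is convex in `x`, since
`x ↦ x ^ v` is concave for `v ∈ [0, 1]`; by the choice of `ξ` it is nonpositive at `s` and `t`,
so by the maximum principle it is nonpositive on all of `[s, t]`.
-/

open Set

lemma ConvexOn.le_mul_of_concaveOn_of_mem_Icc {𝕜 : Type*} [Field 𝕜] [LinearOrder 𝕜]
    [IsStrictOrderedRing 𝕜] {S : Set 𝕜} {f g : 𝕜 → 𝕜} {c x y z : 𝕜}
    (hg : ConvexOn 𝕜 S g) (hf : ConcaveOn 𝕜 S f) (hc : 0 ≤ c) (hx : x ∈ S) (hy : y ∈ S)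
    (hgx : g x ≤ c * f x) (hgy : g y ≤ c * f y) (hz : z ∈ Icc x y) : g z ≤ c * f z := by
  have hconvex : ConvexOn 𝕜 S (g - c • f) := hg.sub (hf.smul hc)
  have hmax := hconvex.le_max_of_mem_Icc hx hy hz
  simp only [Pi.sub_apply, Pi.smul_apply, smul_eq_mul] at hmax
  linarith [max_le (sub_nonpos.2 hgx) (sub_nonpos.2 hgy)]

namespace Real

noncomputable def weightedAMGMRatio (v x : ℝ) : ℝ := ((1 - v) + v * x) / x ^ v

variable {v : ℝ}

lemma one_sub_add_mul_pos {x : ℝ} (hx : 0 < x) (hv0 : 0 ≤ v) (hv1 : v ≤ 1) :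
    0 < (1 - v) + v * x := by
  nlinarith [mul_nonneg hv0 hx.le, mul_nonneg (sub_nonneg.2 hv1) hx.le]

lemma weightedAMGMRatio_pos {x : ℝ} (hx : 0 < x) (hv0 : 0 ≤ v) (hv1 : v ≤ 1) :
    0 < weightedAMGMRatio v x :=
  div_pos (one_sub_add_mul_pos hx hv0 hv1) (rpow_pos_of_pos hx v)

lemma convexOn_one_sub_add_mul (hv0 : 0 ≤ v) :
    ConvexOn ℝ (Ici 0) fun x : ℝ => (1 - v) + v * x :=
  (((convexOn_id (convex_Ici (0 : ℝ))).smul hv0).add_const (1 - v)).congr fun x _ => by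
    simp only [Pi.add_apply, id, smul_eq_mul]; ring

lemma weightedAMGMRatio_mul_rpow {x : ℝ} (hx : 0 < x) :
    weightedAMGMRatio v x * x ^ v = (1 - v) + v * x :=
  div_mul_cancel₀ _ (rpow_pos_of_pos hx v).ne'

lemma one_sub_add_mul_le_max_weightedAMGMRatio_mul_rpow {s t x : ℝ} (hs : 0 < s)
    (hx : x ∈ Icc s t) (hv0 : 0 ≤ v) (hv1 : v ≤ 1) :
    (1 - v) + v * x ≤ max (weightedAMGMRatio v s) (weightedAMGMRatio v t) * x ^ v := by
  have ht : 0 < t := hs.trans_le (hx.1.trans hx.2)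
  refine (convexOn_one_sub_add_mul hv0).le_mul_of_concaveOn_of_mem_Icc (concaveOn_rpow hv0 hv1)
    ((weightedAMGMRatio_pos hs hv0 hv1).le.trans (le_max_left _ _)) hs.le ht.le ?_ ?_ hx
  · exact (weightedAMGMRatio_mul_rpow hs).ge.trans <|
      mul_le_mul_of_nonneg_right (le_max_left _ _) (rpow_nonneg hs.le v)
  · exact (weightedAMGMRatio_mul_rpow ht).ge.trans <|
      mul_le_mul_of_nonneg_right (le_max_right _ _) (rpow_nonneg ht.le v)

lemma rpow_one_sub_mul_rpow_eq_mul_div_rpow {a b : ℝ} (ha : 0 < a) (hb : 0 ≤ b) :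
    a ^ (1 - v) * b ^ v = a * (b / a) ^ v := by
  rw [div_rpow hb ha.le, rpow_sub ha, rpow_one]
  field_simp

end Real

open Real in
theorem reverse_AM_GM_sandwich_general (a b s t v : ℝ)
    (ha : 0 < a) (hs : 0 < s)
    (hsa : s * a ≤ b) (hbt : b ≤ t * a) (hv0 : 0 ≤ v) (hv1 : v ≤ 1) :
    (1 / max (((1 - v) + v * s) / s ^ v) (((1 - v) + v * t) / t ^ v)) * ((1 - v) * a + v * b)
      ≤ a ^ (1 - v) * b ^ v := by
  have hx : b / a ∈ Icc s t := ⟨(le_div_iff₀ ha).2 hsa, (div_le_iff₀ ha).2 hbt⟩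
  have hb : 0 ≤ b := (mul_pos hs ha).le.trans hsa
  change 1 / max (weightedAMGMRatio v s) (weightedAMGMRatio v t) * _ ≤ _
  set ξ := max (weightedAMGMRatio v s) (weightedAMGMRatio v t)
  have hξ : 0 < ξ := (weightedAMGMRatio_pos hs hv0 hv1).trans_le (le_max_left _ _)
  rw [rpow_one_sub_mul_rpow_eq_mul_div_rpow ha hb, one_div, inv_mul_le_iff₀ hξ]
  calc (1 - v) * a + v * b = a * ((1 - v) + v * (b / a)) := by field_simp
    _ ≤ a * (ξ * (b / a) ^ v) := mul_le_mul_of_nonneg_left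
          (one_sub_add_mul_le_max_weightedAMGMRatio_mul_rpow hs hx hv0 hv1) ha.le
    _ = ξ * (a * (b / a) ^ v) := by ring

theorem reverse_AM_GM_sandwich (a b s t v : ℝ)
    (ha : 0 < a) (hb : 0 < b) (hs : 0 < s) (hst : s ≤ t)
    (hsa : s * a ≤ b) (hbt : b ≤ t * a) (hv0 : 0 ≤ v) (hv1 : v ≤ 1) :
    (1 / max (((1 - v) + v * s) / s ^ v) (((1 - v) + v * t) / t ^ v)) * ((1 - v) * a + v * b)
      ≤ a ^ (1 - v) * b ^ v :=
  reverse_AM_GM_sandwich_general a b s t v ha hs hsa hbt hv0 hv1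
end

section
/- Let 0 < m₂ ≤ a ≤ m₁ < M₁ ≤ b ≤ M₂, v ≥ 1 and p > 1. Then a^p ♯_v b^p ≤ C_p · (a ♯_v b)^p, where x ♯_v y = x^{1-v}·y^v and C_p = (m₂^p ♯_v M₂^p)/((1-v)·m₂^p + v·M₂^p). -/
/-!
Both sides carry the same power: `(a ^ p) ^ (1 - v) * (b ^ p) ^ v = (a ^ (1 - v) * b ^ v) ^ p`.
So it suffices that `C_p ≥ 1`, i.e. that for weights `1 - v ≤ 0 ≤ v` the weighted geometric
mean dominates the weighted arithmetic one; this is Bernoulli's inequality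
`1 + v t ≤ (1 + t) ^ v` applied to `t = M₂ ^ p / m₂ ^ p - 1`.
Since `p > 0` gives `m₂ ^ p ≤ M₂ ^ p`, the denominator of `C_p` is positive.
-/

namespace Real

theorem arith_mean2_weighted_le_geom_mean_of_one_le {x y v : ℝ} (hx : 0 < x) (hy : 0 ≤ y)
    (hv : 1 ≤ v) : (1 - v) * x + v * y ≤ x ^ (1 - v) * y ^ v :=
  have bernoulli : 1 + v * (y / x - 1) ≤ (y / x) ^ v := by
    simpa using one_add_mul_self_le_rpow_one_add (s := y / x - 1)
      (by linarith [div_nonneg hy hx.le]) hv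
  calc (1 - v) * x + v * y = x * (1 + v * (y / x - 1)) := by field_simp; ring
    _ ≤ x * (y / x) ^ v := mul_le_mul_of_nonneg_left bernoulli hx.le
    _ = x ^ (1 - v) * y ^ v := by
      rw [div_rpow hy hx.le, rpow_sub hx, rpow_one]
      ring

theorem one_le_geom_div_arith_mean2_weighted {x y v : ℝ} (hx : 0 < x) (hxy : x ≤ y)
    (hv : 1 ≤ v) : 1 ≤ x ^ (1 - v) * y ^ v / ((1 - v) * x + v * y) := by
  have hden : 0 < (1 - v) * x + v * y := by nlinarith
  exact (one_le_div hden).mpr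
    (arith_mean2_weighted_le_geom_mean_of_one_le hx (hx.le.trans hxy) hv)

theorem rpow_rpow_mul_rpow_rpow {a b : ℝ} (ha : 0 ≤ a) (hb : 0 ≤ b) (p s t : ℝ) :
    (a ^ p) ^ s * (b ^ p) ^ t = (a ^ s * b ^ t) ^ p := by
  rw [mul_rpow (rpow_nonneg ha _) (rpow_nonneg hb _), ← rpow_mul ha, ← rpow_mul hb,
    ← rpow_mul ha, ← rpow_mul hb, mul_comm p, mul_comm p]

end Real

theorem scalar_ando_hiai_extended (m₁ m₂ M₁ M₂ a b v p : ℝ)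
    (hm₂ : 0 < m₂) (h1 : m₂ ≤ a) (h2 : a ≤ m₁) (h3 : m₁ < M₁) (h4 : M₁ ≤ b) (h5 : b ≤ M₂)
    (hv : 1 ≤ v) (hp : 1 < p) :
    (a ^ p) ^ (1 - v) * (b ^ p) ^ v
      ≤ ((m₂ ^ p) ^ (1 - v) * (M₂ ^ p) ^ v / ((1 - v) * m₂ ^ p + v * M₂ ^ p))
        * (a ^ (1 - v) * b ^ v) ^ p := by
  have ha : 0 < a := hm₂.trans_le h1
  have hb : 0 < b := ha.trans_le (h2.trans (h3.le.trans h4))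
  have hmM : m₂ ^ p ≤ M₂ ^ p :=
    Real.rpow_le_rpow hm₂.le (h1.trans (h2.trans (h3.le.trans (h4.trans h5)))) (by linarith)
  rw [Real.rpow_rpow_mul_rpow_rpow ha.le hb.le]
  exact le_mul_of_one_le_left (by positivity)
    (Real.one_le_geom_div_arith_mean2_weighted (by positivity) hmM hv)
end

section
/- Fix reals m < M and v ∈ [0,1], and set λ = min{v, 1-v}, μ = max{v, 1-v}. For p > 0 define L(p) = ((e^{pm} ∇_λ e^{pM})·(e^{pm} ♯_μ e^{pM})) / ((e^{pm} ♯_λ e^{pM})·(e^{pm} !_μ e^{pM})), where x ∇_w y = (1-w)x + wy, x ♯_w y = x^{1-w}y^w, and x !_w y = ((1-w)/x + w/y)^{-1} for positive x, y. Then lim_{p→0⁺} L(p)^{1/p} = 1. -/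
/-!
All three weighted means of `exp (p * m)` and `exp (p * M)` with weight `w` equal
`1 + p * ((1 - w) * m + w * M) + O(p²)`, so the first-order terms cancel in `L(p)`:
`L(0) = 1` and `L'(0) = 0`. Hence `log L(p) / p → L'(0) = 0`, i.e. `L(p) ^ (1 / p) → 1`.
-/

open Real Filter Topology

noncomputable def arithMean (w x y : ℝ) : ℝ := (1 - w) * x + w * y

noncomputable def geomMean (w x y : ℝ) : ℝ := x ^ (1 - w) * y ^ w

noncomputable def harmMean (w x y : ℝ) : ℝ := ((1 - w) / x + w / y)⁻¹

/-- The paper's `L(p)`, with general weights `a, b` in place of `λ, μ`. -/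
noncomputable def meanRatio (a b m M p : ℝ) : ℝ :=
  (arithMean a (exp (p * m)) (exp (p * M)) * geomMean b (exp (p * m)) (exp (p * M))) /
    (geomMean a (exp (p * m)) (exp (p * M)) * harmMean b (exp (p * m)) (exp (p * M)))

section ExpMeans

variable (w m M : ℝ)

theorem hasDerivAt_arithMean_exp :
    HasDerivAt (fun p => arithMean w (exp (p * m)) (exp (p * M))) ((1 - w) * m + w * M) 0 := by
  have h := ((hasDerivAt_mul_const (x := 0) m).exp.const_mul (1 - w)).add
    ((hasDerivAt_mul_const (x := 0) M).exp.const_mul w)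
  simpa [arithMean, Pi.add_def] using h

theorem geomMean_exp (x y : ℝ) : geomMean w (exp x) (exp y) = exp ((1 - w) * x + w * y) := by
  rw [geomMean, ← exp_mul, ← exp_mul, ← exp_add]
  ring_nf

theorem hasDerivAt_geomMean_exp :
    HasDerivAt (fun p => geomMean w (exp (p * m)) (exp (p * M))) ((1 - w) * m + w * M) 0 := by
  simp only [geomMean_exp]
  have h := ((hasDerivAt_mul_const (x := 0) ((1 - w) * m + w * M)).exp)
  convert h using 1
  · ext p; ring_nf
  · simp

theorem harmMean_exp (x y : ℝ) :
    harmMean w (exp x) (exp y) = (arithMean w (exp (-x)) (exp (-y)))⁻¹ := by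
  simp [harmMean, arithMean, exp_neg, div_eq_mul_inv]

theorem hasDerivAt_harmMean_exp :
    HasDerivAt (fun p => harmMean w (exp (p * m)) (exp (p * M))) ((1 - w) * m + w * M) 0 := by
  have h := (hasDerivAt_arithMean_exp w (-m) (-M)).inv (by simp [arithMean])
  simp only [harmMean_exp, ← mul_neg]
  refine h.congr_deriv ?_
  simp [arithMean, add_comm]

end ExpMeans

theorem hasDerivAt_meanRatio (a b m M : ℝ) : HasDerivAt (meanRatio a b m M) 0 0 := by
  have h := ((hasDerivAt_arithMean_exp a m M).mul (hasDerivAt_geomMean_exp b m M)).div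
    ((hasDerivAt_geomMean_exp a m M).mul (hasDerivAt_harmMean_exp b m M))
    (by simp [geomMean, harmMean])
  refine h.congr_deriv ?_
  simp [arithMean, geomMean, harmMean]

theorem HasDerivAt.tendsto_rpow_one_div {f : ℝ → ℝ} {d : ℝ} (hf : HasDerivAt f d 0)
    (hf0 : f 0 = 1) : Tendsto (fun p => f p ^ (1 / p)) (𝓝[≠] 0) (𝓝 (Real.exp d)) := by
  have hlog : HasDerivAt (fun p => Real.log (f p)) d 0 := by
    simpa [hf0] using hf.log (by simp [hf0])
  have hslope : Tendsto (fun p => Real.log (f p) * (1 / p)) (𝓝[≠] 0) (𝓝 d) := by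
    refine hlog.tendsto_slope.congr fun p => ?_
    simp [slope_def_field, hf0, div_eq_mul_inv, mul_comm]
  have hpos : ∀ᶠ p in 𝓝[≠] 0, 0 < f p :=
    nhdsWithin_le_nhds (hf.continuousAt.eventually (lt_mem_nhds (by simp [hf0])))
  refine ((continuous_exp.tendsto d).comp hslope).congr' ?_
  filter_upwards [hpos] with p hp
  simp [rpow_def_of_pos hp]

theorem limit_L_pow_one_div_p_general (m M v : ℝ) :
    Tendsto
      (fun p : ℝ =>
        ((((1 - min v (1 - v)) * exp (p * m) + min v (1 - v) * exp (p * M)) *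
            (exp (p * m) ^ (1 - max v (1 - v)) * exp (p * M) ^ (max v (1 - v)))) /
          ((exp (p * m) ^ (1 - min v (1 - v)) * exp (p * M) ^ (min v (1 - v))) *
            ((1 - max v (1 - v)) / exp (p * m) + max v (1 - v) / exp (p * M))⁻¹)) ^ (1 / p))
      (nhdsWithin 0 (Set.Ioi 0)) (nhds 1) := by
  have h := (hasDerivAt_meanRatio (min v (1 - v)) (max v (1 - v)) m M).tendsto_rpow_one_div
    (by simp [meanRatio, arithMean, geomMean, harmMean])
  rw [exp_zero] at h
  exact h.mono_left (nhdsGT_le_nhdsNE 0)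

theorem limit_L_pow_one_div_p (m M v : ℝ) (hmM : m < M) (hv0 : 0 ≤ v) (hv1 : v ≤ 1) :
    Tendsto
      (fun p : ℝ =>
        ((((1 - min v (1 - v)) * exp (p * m) + min v (1 - v) * exp (p * M)) *
            (exp (p * m) ^ (1 - max v (1 - v)) * exp (p * M) ^ (max v (1 - v)))) /
          ((exp (p * m) ^ (1 - min v (1 - v)) * exp (p * M) ^ (min v (1 - v))) *
            ((1 - max v (1 - v)) / exp (p * m) + max v (1 - v) / exp (p * M))⁻¹)) ^ (1 / p))
      (nhdsWithin 0 (Set.Ioi 0)) (nhds 1) :=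
  limit_L_pow_one_div_p_general m M v
end

section
/- Let 0 < m < M, let f : [m,M] → (0,∞) be convex and decreasing, and let v ∈ [0,1]. Define K = max over t ∈ [m,M] of (a_f·t + b_f)/f(t), where a_f = (f(M)-f(m))/(M-m) and b_f = (M·f(m)-m·f(M))/(M-m). Then for all a, b ∈ [m, M]: (1-v)·f(a) + v·f(b) ≤ K · f((1-v)·a + v·b). -/
/-!
On `[m, M]` a convex `f` lies below its secant line `L t = a_f t + b_f`, and `L ≤ K f` there by the
choice of `K`. As `L` is affine, `(1 - v) f a + v f b ≤ (1 - v) L a + v L b = L c ≤ K f c` for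
`c = (1 - v) a + v b ∈ [m, M]`.
-/

open Set

noncomputable def secantLine (f : ℝ → ℝ) (m M t : ℝ) : ℝ :=
  (f M - f m) / (M - m) * t + (M * f m - m * f M) / (M - m)

theorem secantLine_convex_combination (f : ℝ → ℝ) (m M v a b : ℝ) :
    (1 - v) * secantLine f m M a + v * secantLine f m M b =
      secantLine f m M ((1 - v) * a + v * b) := by
  unfold secantLine
  ring

namespace ConvexOn

variable {f : ℝ → ℝ} {m M t : ℝ}

theorem sub_mul_le_of_mem_Icc (hf : ConvexOn ℝ (Icc m M) f) (ht : t ∈ Icc m M) :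
    (M - m) * f t ≤ (M - t) * f m + (t - m) * f M := by
  rcases ht.1.eq_or_lt with rfl | hmt
  · linarith
  rcases ht.2.eq_or_lt with rfl | htM
  · linarith
  exact hf.secant_mono_aux1 (left_mem_Icc.2 (hmt.trans htM).le)
    (right_mem_Icc.2 (hmt.trans htM).le) hmt htM

theorem le_secantLine (hf : ConvexOn ℝ (Icc m M) f) (hmM : m < M) (ht : t ∈ Icc m M) :
    f t ≤ secantLine f m M t := by
  have hMm : 0 < M - m := sub_pos.2 hmM
  have hL : secantLine f m M t = ((M - t) * f m + (t - m) * f M) / (M - m) := by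
    unfold secantLine
    field_simp
    ring
  rw [hL, le_div_iff₀ hMm, mul_comm]
  exact hf.sub_mul_le_of_mem_Icc ht

end ConvexOn

theorem mond_pecaric_convex_decreasing_general (m M : ℝ) (hmM : m < M)
    (f : ℝ → ℝ) (hfpos : ∀ t ∈ Set.Icc m M, 0 < f t)
    (hconv : ConvexOn ℝ (Set.Icc m M) f)
    (v : ℝ) (hv0 : 0 ≤ v) (hv1 : v ≤ 1) (K : ℝ)
    (hK : IsGreatest
      ((fun t => (((f M - f m) / (M - m)) * t + (M * f m - m * f M) / (M - m)) / f t) ''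
        Set.Icc m M) K)
    (a b : ℝ) (ha : a ∈ Set.Icc m M) (hb : b ∈ Set.Icc m M) :
    (1 - v) * f a + v * f b ≤ K * f ((1 - v) * a + v * b) := by
  set c := (1 - v) * a + v * b
  have hc : c ∈ Icc m M := convex_Icc m M ha hb (sub_nonneg.2 hv1) hv0 (by ring)
  have hLc : secantLine f m M c / f c ≤ K := hK.2 ⟨c, hc, rfl⟩
  calc (1 - v) * f a + v * f b
      ≤ (1 - v) * secantLine f m M a + v * secantLine f m M b := by
        gcongr
        exacts [hconv.le_secantLine hmM ha, hconv.le_secantLine hmM hb]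
    _ = secantLine f m M c := secantLine_convex_combination f m M v a b
    _ ≤ K * f c := (div_le_iff₀ (hfpos c hc)).1 hLc

theorem mond_pecaric_convex_decreasing (m M : ℝ) (hm : 0 < m) (hmM : m < M)
    (f : ℝ → ℝ) (hfpos : ∀ t ∈ Set.Icc m M, 0 < f t)
    (hconv : ConvexOn ℝ (Set.Icc m M) f) (hdec : AntitoneOn f (Set.Icc m M))
    (v : ℝ) (hv0 : 0 ≤ v) (hv1 : v ≤ 1) (K : ℝ)
    (hK : IsGreatest
      ((fun t => (((f M - f m) / (M - m)) * t + (M * f m - m * f M) / (M - m)) / f t) ''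
        Set.Icc m M) K)
    (a b : ℝ) (ha : a ∈ Set.Icc m M) (hb : b ∈ Set.Icc m M) :
    (1 - v) * f a + v * f b ≤ K * f ((1 - v) * a + v * b) :=
  mond_pecaric_convex_decreasing_general m M hmM f hfpos hconv v hv0 hv1 K hK a b ha hb
end

section
/- Let 0 < m < M, let f : [m,M] → (0,∞) be concave and increasing, and let v ∈ [0,1]. Define K' = max over t ∈ [m,M] of f(t)·(a_g·t + b_g), where g = 1/f, a_g = (g(M)-g(m))/(M-m) and b_g = (M·g(m)-m·g(M))/(M-m). Then for all a, b ∈ [m, M]: f((1-v)·a + v·b) ≤ K' · ((1-v)·f(a) + v·f(b)). -/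
/-!
With `g = 1/f` and `L` the secant line of `g` over `[m, M]`, the convexity of `g` gives `g ≤ L`
on `[m, M]`. For `c = (1 - v) a + v b`, the affine function `L` satisfies
`L c = (1 - v) L a + v L b ≥ (1 - v)/f a + v/f b ≥ 1/((1 - v) f a + v f b)`, the last step being
the convexity of `x ↦ x⁻¹`. Hence `f c ≤ f c · L c · ((1 - v) f a + v f b) ≤ K' ((1 - v) f a + v f b)`.
-/

open Set

section

variable {𝕜 : Type*} [Field 𝕜] [LinearOrder 𝕜] [IsStrictOrderedRing 𝕜]

theorem convexOn_inv : ConvexOn 𝕜 (Ioi 0) fun x : 𝕜 => x⁻¹ := by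
  simpa only [zpow_neg_one] using convexOn_zpow (𝕜 := 𝕜) (-1)

theorem ConcaveOn.convexOn_inv {E : Type*} [AddCommMonoid E] [Module 𝕜 E] {s : Set E}
    {f : E → 𝕜} (hf : ConcaveOn 𝕜 s f) (hpos : ∀ x ∈ s, 0 < f x) :
    ConvexOn 𝕜 s fun x => (f x)⁻¹ := by
  refine ⟨hf.1, fun x hx y hy a b ha hb hab => ?_⟩
  have hcomb : 0 < a * f x + b * f y := by
    rcases ha.eq_or_lt with rfl | ha'
    · simp only [zero_add] at hab
      simpa [hab] using hpos y hy
    · exact add_pos_of_pos_of_nonneg (mul_pos ha' (hpos x hx)) (mul_nonneg hb (hpos y hy).le)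
  calc (f (a • x + b • y))⁻¹ ≤ (a * f x + b * f y)⁻¹ :=
        inv_anti₀ hcomb (by simpa only [smul_eq_mul] using hf.2 hx hy ha hb hab)
    _ ≤ a * (f x)⁻¹ + b * (f y)⁻¹ := by
        simpa only [smul_eq_mul] using
          _root_.convexOn_inv.2 (mem_Ioi.2 (hpos x hx)) (mem_Ioi.2 (hpos y hy)) ha hb hab

theorem ConvexOn.le_secant {g : 𝕜 → 𝕜} {m M t : 𝕜} (hg : ConvexOn 𝕜 (Icc m M) g) (hmM : m < M)
    (ht : t ∈ Icc m M) :
    g t ≤ (g M - g m) / (M - m) * t + (M * g m - m * g M) / (M - m) := by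
  have hMm : 0 < M - m := sub_pos.2 hmM
  have key := hg.2 (left_mem_Icc.2 hmM.le) (right_mem_Icc.2 hmM.le)
    (div_nonneg (sub_nonneg.2 ht.2) hMm.le) (div_nonneg (sub_nonneg.2 ht.1) hMm.le)
    (by field_simp; ring)
  have hcomb : ((M - t) / (M - m)) • m + ((t - m) / (M - m)) • M = t := by
    simp only [smul_eq_mul]; field_simp; ring
  rw [hcomb, smul_eq_mul, smul_eq_mul] at key
  calc g t ≤ (M - t) / (M - m) * g m + (t - m) / (M - m) * g M := key
    _ = (g M - g m) / (M - m) * t + (M * g m - m * g M) / (M - m) := by field_simp; ring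

end

theorem mond_pecaric_concave_increasing_general (m M : ℝ) (hmM : m < M)
    (f : ℝ → ℝ) (hfpos : ∀ t ∈ Set.Icc m M, 0 < f t)
    (hconc : ConcaveOn ℝ (Set.Icc m M) f)
    (v : ℝ) (hv0 : 0 ≤ v) (hv1 : v ≤ 1) (K' : ℝ)
    (hK' : IsGreatest
      ((fun t => f t *
          ((((f M)⁻¹ - (f m)⁻¹) / (M - m)) * t + (M * (f m)⁻¹ - m * (f M)⁻¹) / (M - m))) ''
        Set.Icc m M) K')
    (a b : ℝ) (ha : a ∈ Set.Icc m M) (hb : b ∈ Set.Icc m M) :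
    f ((1 - v) * a + v * b) ≤ K' * ((1 - v) * f a + v * f b) := by
  set L : ℝ → ℝ := fun t =>
    ((f M)⁻¹ - (f m)⁻¹) / (M - m) * t + (M * (f m)⁻¹ - m * (f M)⁻¹) / (M - m)
  set c := (1 - v) * a + v * b
  set w := (1 - v) * f a + v * f b
  have hv : 0 ≤ 1 - v := sub_nonneg.2 hv1
  have hc : c ∈ Icc m M := by
    simpa only [smul_eq_mul] using convex_Icc m M ha hb hv hv0 (sub_add_cancel 1 v)
  have hsec (t : ℝ) (ht : t ∈ Icc m M) : (f t)⁻¹ ≤ L t :=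
    (hconc.convexOn_inv hfpos).le_secant hmM ht
  have hw : 0 < w := by
    simpa only [smul_eq_mul, mem_Ioi] using
      (convex_Ioi (0 : ℝ)) (hfpos a ha) (hfpos b hb) hv hv0 (sub_add_cancel 1 v)
  have harmonic : w⁻¹ ≤ (1 - v) * (f a)⁻¹ + v * (f b)⁻¹ := by
    simpa only [smul_eq_mul] using
      convexOn_inv.2 (mem_Ioi.2 (hfpos a ha)) (mem_Ioi.2 (hfpos b hb)) hv hv0 (sub_add_cancel 1 v)
  have hw_inv_le : w⁻¹ ≤ L c := calc
    w⁻¹ ≤ (1 - v) * L a + v * L b := harmonic.trans (by gcongr <;> exact hsec _ ‹_›)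
    _ = L c := by simp only [L, c]; ring
  calc f c ≤ f c * (L c * w) :=
        le_mul_of_one_le_right (hfpos c hc).le ((inv_le_iff_one_le_mul₀ hw).1 hw_inv_le)
    _ = f c * L c * w := by ring
    _ ≤ K' * w := mul_le_mul_of_nonneg_right (hK'.2 ⟨c, hc, rfl⟩) hw.le

theorem mond_pecaric_concave_increasing (m M : ℝ) (hm : 0 < m) (hmM : m < M)
    (f : ℝ → ℝ) (hfpos : ∀ t ∈ Set.Icc m M, 0 < f t)
    (hconc : ConcaveOn ℝ (Set.Icc m M) f) (hinc : MonotoneOn f (Set.Icc m M))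
    (v : ℝ) (hv0 : 0 ≤ v) (hv1 : v ≤ 1) (K' : ℝ)
    (hK' : IsGreatest
      ((fun t => f t *
          ((((f M)⁻¹ - (f m)⁻¹) / (M - m)) * t + (M * (f m)⁻¹ - m * (f M)⁻¹) / (M - m))) ''
        Set.Icc m M) K')
    (a b : ℝ) (ha : a ∈ Set.Icc m M) (hb : b ∈ Set.Icc m M) :
    f ((1 - v) * a + v * b) ≤ K' * ((1 - v) * f a + v * f b) :=
  mond_pecaric_concave_increasing_general m M hmM f hfpos hconc v hv0 hv1 K' hK' a b ha hb
end

section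
/- Let A and B be n×n complex Hermitian matrices. Then trace(exp(A + B)) ≤ trace(exp(A)·exp(B)). In particular, the right-hand side is a real number. -/
/-!
By the Lie product formula, `exp (A + B)` is the limit of `(exp (2⁻ᵏ A) * exp (2⁻ᵏ B)) ^ 2 ^ k`.
For Hermitian `X`, `Y` one has `Re tr ((X Y) ^ 2 ^ k) ≤ Re tr (X ^ 2 ^ k * Y ^ 2 ^ k)`; this is
proved by induction on `k`, jointly with `‖tr (C ^ 2 ^ (k + 1))‖ ≤ Re tr ((C Cᴴ) ^ 2 ^ k)` for
arbitrary `C`, each step combining cyclicity of the trace with the Cauchy–Schwarz inequality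
`‖tr (M N)‖² ≤ Re tr (M Mᴴ) * Re tr (N Nᴴ)`. Taking `X = exp (2⁻ᵏ A)`, `Y = exp (2⁻ᵏ B)`
and letting `k → ∞` gives the inequality. The trace of a product of two Hermitian matrices is real.
-/

open NormedSpace Filter Topology Asymptotics

namespace Matrix

variable {ι 𝕜 : Type*} [Fintype ι] [RCLike 𝕜]

lemma re_trace_mul_conjTranspose (M : Matrix ι ι 𝕜) :
    RCLike.re (M * Mᴴ).trace = ∑ i, ∑ j, ‖M i j‖ ^ 2 := by
  simp only [trace, diag, mul_apply, conjTranspose_apply, RCLike.star_def, RCLike.mul_conj,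
    map_sum]
  norm_cast

lemma re_trace_mul_conjTranspose_nonneg (M : Matrix ι ι 𝕜) : 0 ≤ RCLike.re (M * Mᴴ).trace := by
  rw [re_trace_mul_conjTranspose]
  positivity

lemma norm_trace_mul_le (M N : Matrix ι ι 𝕜) :
    ‖(M * N).trace‖ ≤ √(RCLike.re (M * Mᴴ).trace) * √(RCLike.re (N * Nᴴ).trace) := by
  rw [re_trace_mul_conjTranspose, re_trace_mul_conjTranspose,
    Finset.sum_comm (f := fun i j => ‖N i j‖ ^ 2)]
  calc ‖(M * N).trace‖ ≤ ∑ i, ∑ j, ‖M i j‖ * ‖N j i‖ := by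
        simp only [trace, diag, mul_apply, ← norm_mul]
        exact (norm_sum_le _ _).trans (Finset.sum_le_sum fun i _ => norm_sum_le _ _)
    _ ≤ _ := by
        simpa only [Finset.sum_product] using Real.sum_mul_le_sqrt_mul_sqrt
          (Finset.univ ×ˢ Finset.univ) (fun p : ι × ι => ‖M p.1 p.2‖) (fun p => ‖N p.2 p.1‖)

lemma IsHermitian.im_trace_mul {P Q : Matrix ι ι 𝕜} (hP : P.IsHermitian) (hQ : Q.IsHermitian) :
    RCLike.im (P * Q).trace = 0 := by
  rw [← RCLike.conj_eq_iff_im, ← RCLike.star_def, ← trace_conjTranspose, conjTranspose_mul,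
    hP.eq, hQ.eq, trace_mul_comm]

variable [DecidableEq ι]

lemma trace_mul_pow_comm (M N : Matrix ι ι 𝕜) (p : ℕ) :
    ((M * N) ^ p).trace = ((N * M) ^ p).trace := by
  cases p with
  | zero => rfl
  | succ p =>
    rw [pow_succ, ← Matrix.mul_assoc, mul_pow_mul, trace_mul_comm, ← Matrix.mul_assoc, ← pow_succ']

lemma norm_trace_sq_le (C : Matrix ι ι 𝕜) : ‖(C ^ 2).trace‖ ≤ RCLike.re (C * Cᴴ).trace := by
  simpa only [sq, Real.mul_self_sqrt (re_trace_mul_conjTranspose_nonneg C)] using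
    norm_trace_mul_le C C

lemma IsHermitian.re_trace_mul_pow_two_pow_succ_le {k : ℕ}
    (hmul : ∀ X Y : Matrix ι ι 𝕜, X.IsHermitian → Y.IsHermitian →
      RCLike.re ((X * Y) ^ 2 ^ k).trace ≤ RCLike.re (X ^ 2 ^ k * Y ^ 2 ^ k).trace)
    (hnorm : ∀ C : Matrix ι ι 𝕜, ‖(C ^ 2 ^ (k + 1)).trace‖ ≤ RCLike.re ((C * Cᴴ) ^ 2 ^ k).trace)
    {X Y : Matrix ι ι 𝕜} (hX : X.IsHermitian) (hY : Y.IsHermitian) :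
    RCLike.re ((X * Y) ^ 2 ^ (k + 1)).trace ≤
      RCLike.re (X ^ 2 ^ (k + 1) * Y ^ 2 ^ (k + 1)).trace := by
  have hXY : X * Y * (X * Y)ᴴ = X * (Y ^ 2 * X) := by
    rw [conjTranspose_mul, hX.eq, hY.eq, sq]; noncomm_ring
  calc RCLike.re ((X * Y) ^ 2 ^ (k + 1)).trace ≤ ‖((X * Y) ^ 2 ^ (k + 1)).trace‖ :=
        RCLike.re_le_norm _
    _ ≤ RCLike.re ((X * Y * (X * Y)ᴴ) ^ 2 ^ k).trace := hnorm _
    _ = RCLike.re ((X ^ 2 * Y ^ 2) ^ 2 ^ k).trace := by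
        rw [hXY, trace_mul_pow_comm X, Matrix.mul_assoc, ← sq, trace_mul_pow_comm]
    _ ≤ RCLike.re ((X ^ 2) ^ 2 ^ k * (Y ^ 2) ^ 2 ^ k).trace := hmul _ _ (hX.pow 2) (hY.pow 2)
    _ = _ := by rw [← pow_mul, ← pow_mul, ← pow_succ']

lemma norm_trace_pow_two_pow_succ_le {k : ℕ}
    (hmul : ∀ X Y : Matrix ι ι 𝕜, X.IsHermitian → Y.IsHermitian →
      RCLike.re ((X * Y) ^ 2 ^ k).trace ≤ RCLike.re (X ^ 2 ^ k * Y ^ 2 ^ k).trace)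
    (hnorm : ∀ C : Matrix ι ι 𝕜, ‖(C ^ 2 ^ (k + 1)).trace‖ ≤ RCLike.re ((C * Cᴴ) ^ 2 ^ k).trace)
    (C : Matrix ι ι 𝕜) :
    ‖(C ^ 2 ^ (k + 2)).trace‖ ≤ RCLike.re ((C * Cᴴ) ^ 2 ^ (k + 1)).trace := by
  set P := (C * Cᴴ) ^ 2 ^ k
  set Q := (Cᴴ * C) ^ 2 ^ k
  have hP : P.IsHermitian := (isHermitian_mul_conjTranspose_self C).pow _
  have hQ : Q.IsHermitian := (isHermitian_conjTranspose_mul_self C).pow _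
  have hC2 : C ^ 2 * (C ^ 2)ᴴ = C * (C * Cᴴ * Cᴴ) := by
    rw [sq, conjTranspose_mul]; noncomm_ring
  have hPQ : (P * Pᴴ).trace = (Q * Qᴴ).trace := by
    rw [hP.eq, hQ.eq, ← pow_add, ← pow_add, trace_mul_pow_comm]
  calc ‖(C ^ 2 ^ (k + 2)).trace‖ = ‖((C ^ 2) ^ 2 ^ (k + 1)).trace‖ := by
        rw [← pow_mul, ← pow_succ']
    _ ≤ RCLike.re ((C ^ 2 * (C ^ 2)ᴴ) ^ 2 ^ k).trace := hnorm _
    _ = RCLike.re ((C * Cᴴ * (Cᴴ * C)) ^ 2 ^ k).trace := by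
        rw [hC2, trace_mul_pow_comm, Matrix.mul_assoc]
    _ ≤ RCLike.re (P * Q).trace :=
        hmul _ _ (isHermitian_mul_conjTranspose_self C) (isHermitian_conjTranspose_mul_self C)
    _ ≤ ‖(P * Q).trace‖ := RCLike.re_le_norm _
    _ ≤ √(RCLike.re (P * Pᴴ).trace) * √(RCLike.re (Q * Qᴴ).trace) := norm_trace_mul_le P Q
    _ = RCLike.re (P * Pᴴ).trace := by
        rw [hPQ, Real.mul_self_sqrt (re_trace_mul_conjTranspose_nonneg Q)]
    _ = RCLike.re ((C * Cᴴ) ^ 2 ^ (k + 1)).trace := by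
        rw [hP.eq, ← pow_add, ← two_mul, ← pow_succ']

lemma re_trace_mul_pow_two_pow_le_and_norm_trace_pow_two_pow_le (k : ℕ) :
    (∀ X Y : Matrix ι ι 𝕜, X.IsHermitian → Y.IsHermitian →
      RCLike.re ((X * Y) ^ 2 ^ k).trace ≤ RCLike.re (X ^ 2 ^ k * Y ^ 2 ^ k).trace) ∧
    ∀ C : Matrix ι ι 𝕜, ‖(C ^ 2 ^ (k + 1)).trace‖ ≤ RCLike.re ((C * Cᴴ) ^ 2 ^ k).trace := by
  induction k with
  | zero =>
    exact ⟨fun X Y _ _ => by simp only [pow_zero, pow_one, le_refl],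
      fun C => by simpa using norm_trace_sq_le C⟩
  | succ k ih =>
    exact ⟨fun X Y hX hY => hX.re_trace_mul_pow_two_pow_succ_le ih.1 ih.2 hY,
      norm_trace_pow_two_pow_succ_le ih.1 ih.2⟩

theorem IsHermitian.re_trace_mul_pow_two_pow_le {X Y : Matrix ι ι 𝕜} (hX : X.IsHermitian)
    (hY : Y.IsHermitian) (k : ℕ) :
    RCLike.re ((X * Y) ^ 2 ^ k).trace ≤ RCLike.re (X ^ 2 ^ k * Y ^ 2 ^ k).trace :=
  (re_trace_mul_pow_two_pow_le_and_norm_trace_pow_two_pow_le k).1 X Y hX hY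

end Matrix

section BanachAlgebra

variable {𝔸 : Type*} [NormedRing 𝔸]

lemma norm_pow_sub_pow_le [NormOneClass 𝔸] {x y : 𝔸} {K : ℝ} (hx : ‖x‖ ≤ K) (hy : ‖y‖ ≤ K)
    (m : ℕ) : ‖x ^ m - y ^ m‖ ≤ m * K ^ (m - 1) * ‖x - y‖ := by
  induction m with
  | zero => simp
  | succ m ih =>
    have hK : 0 ≤ K := (norm_nonneg x).trans hx
    have hmK : (m : ℝ) * K ^ (m - 1) * K = m * K ^ m := by
      rcases m with _ | m
      · simp
      · simp [pow_succ, mul_assoc]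
    calc ‖x ^ (m + 1) - y ^ (m + 1)‖ = ‖x ^ m * (x - y) + (x ^ m - y ^ m) * y‖ := by
          congr 1; noncomm_ring
      _ ≤ ‖x ^ m‖ * ‖x - y‖ + ‖x ^ m - y ^ m‖ * ‖y‖ :=
          (norm_add_le _ _).trans (add_le_add (norm_mul_le _ _) (norm_mul_le _ _))
      _ ≤ K ^ m * ‖x - y‖ + m * K ^ (m - 1) * ‖x - y‖ * K := by
          gcongr
          exact (norm_pow_le x m).trans (pow_le_pow_left₀ (norm_nonneg x) hx m)
      _ = (m + 1 : ℕ) * K ^ (m + 1 - 1) * ‖x - y‖ := by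
          rw [mul_right_comm _ ‖x - y‖, hmK]; push_cast; ring_nf

variable [NormedAlgebra ℝ 𝔸]

namespace NormedSpace

lemma norm_exp_le_exp_norm [NormOneClass 𝔸] (x : 𝔸) : ‖exp x‖ ≤ Real.exp ‖x‖ := by
  rw [exp_eq_tsum ℝ, Real.exp_eq_exp_ℝ, exp_eq_tsum_div]
  refine (norm_tsum_le_tsum_norm (norm_expSeries_summable' x)).trans ?_
  refine Summable.tsum_le_tsum (fun i => ?_) (norm_expSeries_summable' x)
    (Real.summable_pow_div_factorial ‖x‖)
  rw [norm_smul, div_eq_inv_mul, Real.norm_of_nonneg (by positivity)]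
  gcongr
  exact norm_pow_le x i

variable [CompleteSpace 𝔸]

lemma exp_inv_natCast_smul_pow {m : ℕ} (hm : m ≠ 0) (x : 𝔸) :
    exp ((m : ℝ)⁻¹ • x) ^ m = exp x := by
  let _ : NormedAlgebra ℚ 𝔸 := .restrictScalars ℚ ℝ 𝔸
  rw [← exp_nsmul, ← Nat.cast_smul_eq_nsmul ℝ, smul_smul, mul_inv_cancel₀ (by exact_mod_cast hm),
    one_smul]

lemma isLittleO_exp_smul_mul_exp_smul_sub_exp_smul (x y : 𝔸) :
    (fun t : ℝ => exp (t • x) * exp (t • y) - exp (t • (x + y))) =o[𝓝 0] fun t => t := by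
  have hderiv := ((hasDerivAt_exp_smul_const x (0 : ℝ)).mul
    (hasDerivAt_exp_smul_const y (0 : ℝ))).sub (hasDerivAt_exp_smul_const (x + y) (0 : ℝ))
  simp only [zero_smul, exp_zero, one_mul, mul_one] at hderiv
  simpa only [Pi.sub_apply, Pi.mul_apply, zero_smul, exp_zero, mul_one, sub_self, smul_zero,
    sub_zero, add_sub_cancel] using hderiv.isLittleO

theorem tendsto_exp_inv_smul_mul_exp_inv_smul_pow [NormOneClass 𝔸] (x y : 𝔸) :
    Tendsto (fun m : ℕ => (exp ((m : ℝ)⁻¹ • x) * exp ((m : ℝ)⁻¹ • y)) ^ m) atTop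
      (𝓝 (exp (x + y))) := by
  set F := fun t : ℝ => exp (t • x) * exp (t • y) - exp (t • (x + y))
  set c := ‖x‖ + ‖y‖
  have hF : Tendsto (fun m : ℕ => m * ‖F (m : ℝ)⁻¹‖) atTop (𝓝 0) := by
    have := ((isLittleO_exp_smul_mul_exp_smul_sub_exp_smul x y).comp_tendsto
      tendsto_inv_atTop_nhds_zero_nat).norm_left.tendsto_div_nhds_zero
    refine this.congr fun m => ?_
    simp only [Function.comp_apply, div_inv_eq_mul, mul_comm, F]
  have hbound : ∀ᶠ m : ℕ in atTop,
      ‖(exp ((m : ℝ)⁻¹ • x) * exp ((m : ℝ)⁻¹ • y)) ^ m - exp (x + y)‖ ≤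
        Real.exp c * (m * ‖F (m : ℝ)⁻¹‖) := by
    filter_upwards [eventually_ne_atTop 0] with m hm
    set t := (m : ℝ)⁻¹
    have ht : 0 ≤ t := by positivity
    have hnorm : ∀ z : 𝔸, ‖exp (t • z)‖ ≤ Real.exp (t * ‖z‖) := fun z => by
      simpa [norm_smul, abs_of_nonneg ht] using norm_exp_le_exp_norm (t • z)
    have hprod : ‖exp (t • x) * exp (t • y)‖ ≤ Real.exp (t * c) :=
      (norm_mul_le _ _).trans <| (mul_le_mul (hnorm x) (hnorm y) (norm_nonneg _)
        (Real.exp_nonneg _)).trans_eq <| by rw [← Real.exp_add, mul_add]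
    have hsum : ‖exp (t • (x + y))‖ ≤ Real.exp (t * c) :=
      (hnorm _).trans <| Real.exp_le_exp.mpr <| mul_le_mul_of_nonneg_left (norm_add_le x y) ht
    have hpow : Real.exp (t * c) ^ (m - 1) ≤ Real.exp c :=
      calc _ ≤ Real.exp (t * c) ^ m :=
            pow_le_pow_right₀ (Real.one_le_exp (by positivity)) (Nat.sub_le m 1)
        _ = Real.exp c := by
            rw [← Real.exp_nat_mul, ← mul_assoc, mul_inv_cancel₀ (by exact_mod_cast hm), one_mul]
    calc ‖(exp (t • x) * exp (t • y)) ^ m - exp (x + y)‖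
        = ‖(exp (t • x) * exp (t • y)) ^ m - exp (t • (x + y)) ^ m‖ := by
          rw [exp_inv_natCast_smul_pow hm]
      _ ≤ m * Real.exp (t * c) ^ (m - 1) * ‖F t‖ := norm_pow_sub_pow_le hprod hsum m
      _ ≤ Real.exp c * (m * ‖F t‖) := by
          rw [mul_comm (Real.exp c), mul_right_comm]; gcongr
  rw [tendsto_iff_norm_sub_tendsto_zero]
  exact squeeze_zero' (Eventually.of_forall fun m => norm_nonneg _) hbound
    (by simpa using hF.const_mul (Real.exp c))

end NormedSpace

end BanachAlgebra

namespace Matrix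

open scoped Norms.Operator

variable {ι 𝕜 : Type*} [Fintype ι] [DecidableEq ι] [RCLike 𝕜]

theorem tendsto_exp_inv_smul_mul_exp_inv_smul_pow (A B : Matrix ι ι 𝕜) :
    Tendsto (fun m : ℕ => (exp ((m : ℝ)⁻¹ • A) * exp ((m : ℝ)⁻¹ • B)) ^ m) atTop
      (𝓝 (exp (A + B))) := by
  cases isEmpty_or_nonempty ι
  · exact tendsto_const_nhds.congr fun m => Subsingleton.elim _ _
  · have : NormOneClass (Matrix ι ι 𝕜) := linfty_opNormOneClass
    exact NormedSpace.tendsto_exp_inv_smul_mul_exp_inv_smul_pow A B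

lemma exp_inv_natCast_smul_pow {m : ℕ} (hm : m ≠ 0) (A : Matrix ι ι 𝕜) :
    exp ((m : ℝ)⁻¹ • A) ^ m = exp A :=
  NormedSpace.exp_inv_natCast_smul_pow hm A

end Matrix

theorem golden_thompson {n : ℕ} (A B : Matrix (Fin n) (Fin n) ℂ)
    (hA : A.IsHermitian) (hB : B.IsHermitian) :
    (NormedSpace.exp (A + B)).trace.re ≤ (NormedSpace.exp A * NormedSpace.exp B).trace.re ∧
      (NormedSpace.exp A * NormedSpace.exp B).trace.im = 0 := by
  refine ⟨?_, Matrix.IsHermitian.im_trace_mul hA.exp hB.exp⟩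
  have hlim := ((Complex.continuous_re.comp continuous_id.matrix_trace).tendsto _).comp
    ((Matrix.tendsto_exp_inv_smul_mul_exp_inv_smul_pow A B).comp
      (tendsto_pow_atTop_atTop_of_one_lt (α := ℕ) one_lt_two))
  refine le_of_tendsto' hlim fun k => ?_
  have hk : 2 ^ k ≠ 0 := by positivity
  have hle := (hA.smul (IsSelfAdjoint.all ((2 ^ k : ℕ) : ℝ)⁻¹)).exp.re_trace_mul_pow_two_pow_le
    (hB.smul (IsSelfAdjoint.all ((2 ^ k : ℕ) : ℝ)⁻¹)).exp k
  rwa [Matrix.exp_inv_natCast_smul_pow hk, Matrix.exp_inv_natCast_smul_pow hk] at hle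
end

section
/- Let 0 < m₂ ≤ a ≤ m₁ < M₁ ≤ b ≤ M₂, let v ≥ 1, and let f : (0,∞) → (0,∞) be increasing and concave. Set C = (m₂^{1-v}·M₂^v)/((1-v)·m₂ + v·M₂). Then f(a^{1-v}·b^v) ≤ f(C·a)^{1-v}·f(C·b)^v. -/
/-!
Write `C = g(M₂/m₂)` with `g(t) = t^v / (1 - v + v t)`. By homogeneity,
`a ♯_v b = g(b/a) · (a ∇_v b)`, and Bernoulli's inequality shows that `g` is increasing on
`[1, ∞)`; since `1 ≤ b/a ≤ M₂/m₂` this gives `a ♯_v b ≤ C · (a ∇_v b) = (C a) ∇_v (C b)`.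
Then monotonicity of `f`, the reversed Jensen inequality for concave `f` (an extrapolation with
weight `v ≥ 1` is a convex combination read backwards) and the reversed AM-GM inequality
(Bernoulli again) finish the chain.
-/

open Real Set

theorem ConcaveOn.le_sub_mul_add_mul_of_one_le {E : Type*} [AddCommGroup E] [Module ℝ E]
    {s : Set E} {f : E → ℝ} (hf : ConcaveOn ℝ s f) {x y : E} {v : ℝ} (hv : 1 ≤ v)
    (hx : x ∈ s) (hz : (1 - v) • x + v • y ∈ s) :
    f ((1 - v) • x + v • y) ≤ (1 - v) * f x + v * f y := by
  have hv₀ : 0 < v := one_pos.trans_le hv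
  have hy : v⁻¹ • ((1 - v) • x + v • y) + (1 - v⁻¹) • x = y := by
    match_scalars <;> field_simp; ring
  have key := hf.2 hz hx (inv_nonneg.2 hv₀.le) (sub_nonneg.2 (inv_le_one_of_one_le₀ hv))
    (add_sub_cancel _ _)
  rw [hy, smul_eq_mul, smul_eq_mul] at key
  calc f ((1 - v) • x + v • y)
      = v * (v⁻¹ * f ((1 - v) • x + v • y) + (1 - v⁻¹) * f x) + (1 - v) * f x := by
        field_simp; ring
    _ ≤ v * f y + (1 - v) * f x := by gcongr
    _ = (1 - v) * f x + v * f y := add_comm _ _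

theorem Real.rpow_one_sub_mul_rpow {x y : ℝ} (hx : 0 < x) (hy : 0 ≤ y) (v : ℝ) :
    x ^ (1 - v) * y ^ v = x * (y / x) ^ v := by
  rw [rpow_sub hx, rpow_one, div_rpow hy hx.le]
  ring

theorem Real.sub_mul_add_mul_le_rpow_mul_rpow {p q v : ℝ} (hp : 0 < p) (hq : 0 ≤ q)
    (hv : 1 ≤ v) : (1 - v) * p + v * q ≤ p ^ (1 - v) * q ^ v := by
  have bernoulli := one_add_mul_self_le_rpow_one_add (s := q / p - 1)
    (by linarith [div_nonneg hq hp.le]) hv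
  rw [add_sub_cancel] at bernoulli
  rw [rpow_one_sub_mul_rpow hp hq]
  calc (1 - v) * p + v * q = p * (1 + v * (q / p - 1)) := by field_simp; ring
    _ ≤ p * (q / p) ^ v := mul_le_mul_of_nonneg_left bernoulli hp.le

noncomputable def geomArithRatio (v t : ℝ) : ℝ := t ^ v / (1 - v + v * t)

theorem geomArithRatio_div {x : ℝ} (hx : 0 < x) {y : ℝ} (hy : 0 ≤ y) (v : ℝ) :
    geomArithRatio v (y / x) = x ^ (1 - v) * y ^ v / ((1 - v) * x + v * y) := by
  have : (1 - v) * x + v * y = x * (1 - v + v * (y / x)) := by field_simp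
  rw [geomArithRatio, rpow_one_sub_mul_rpow hx hy, this, mul_div_mul_left _ _ hx.ne']

theorem one_sub_add_mul_pos {v t : ℝ} (hv : 0 ≤ v) (ht : 1 ≤ t) : 0 < 1 - v + v * t := by
  nlinarith

theorem geomArithRatio_pos {v t : ℝ} (hv : 0 ≤ v) (ht : 1 ≤ t) : 0 < geomArithRatio v t :=
  div_pos (rpow_pos_of_pos (one_pos.trans_le ht) v) (one_sub_add_mul_pos hv ht)

theorem geomArithRatio_monotoneOn {v : ℝ} (hv : 1 ≤ v) :
    MonotoneOn (geomArithRatio v) (Ici 1) := by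
  intro t ht s hs hts
  have ht' : 1 ≤ t := ht
  have ht₀ : 0 < t := one_pos.trans_le ht'
  have hv₀ : 0 ≤ v := zero_le_one.trans hv
  obtain ⟨u, rfl⟩ : ∃ u, s = t * u := ⟨s / t, by field_simp⟩
  have hu₁ : 1 ≤ u := le_of_mul_le_mul_left (by rwa [mul_one]) ht₀
  have bernoulli := one_add_mul_self_le_rpow_one_add (s := u - 1) (by linarith) hv
  rw [add_sub_cancel] at bernoulli
  rw [geomArithRatio, geomArithRatio, div_le_div_iff₀ (one_sub_add_mul_pos hv₀ ht')
    (one_sub_add_mul_pos hv₀ hs), mul_rpow ht₀.le (zero_le_one.trans hu₁)]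
  -- `(1 + v (u - 1)) (1 - v + v t) - (1 - v + v t u) = v (v - 1) (t - 1) (u - 1) ≥ 0`
  have hkey : 1 - v + v * (t * u) ≤ (1 + v * (u - 1)) * (1 - v + v * t) := by
    nlinarith [mul_nonneg (mul_nonneg hv₀ (sub_nonneg.2 hv)) (mul_nonneg (sub_nonneg.2 ht')
      (sub_nonneg.2 hu₁))]
  have htv : 0 < t ^ v := rpow_pos_of_pos ht₀ v
  calc t ^ v * (1 - v + v * (t * u))
      ≤ t ^ v * ((1 + v * (u - 1)) * (1 - v + v * t)) := mul_le_mul_of_nonneg_left hkey htv.le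
    _ ≤ t ^ v * (u ^ v * (1 - v + v * t)) :=
      mul_le_mul_of_nonneg_left
        (mul_le_mul_of_nonneg_right bernoulli (one_sub_add_mul_pos hv₀ ht').le) htv.le
    _ = t ^ v * u ^ v * (1 - v + v * t) := by ring

theorem rpow_one_sub_mul_rpow_le_geomArithRatio_mul {m M x y v : ℝ} (hm : 0 < m)
    (hmx : m ≤ x) (hxy : x ≤ y) (hyM : y ≤ M) (hv : 1 ≤ v) :
    x ^ (1 - v) * y ^ v ≤ geomArithRatio v (M / m) * ((1 - v) * x + v * y) := by
  have hx : 0 < x := hm.trans_le hmx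
  have hy : 0 ≤ y := hx.le.trans hxy
  have hyx : 1 ≤ y / x := (one_le_div hx).2 hxy
  have hD : 0 < (1 - v) * x + v * y := by nlinarith
  calc x ^ (1 - v) * y ^ v = geomArithRatio v (y / x) * ((1 - v) * x + v * y) := by
        rw [geomArithRatio_div hx hy, div_mul_cancel₀ _ hD.ne']
    _ ≤ geomArithRatio v (M / m) * ((1 - v) * x + v * y) := by
      have hyxM : y / x ≤ M / m := div_le_div₀ (hy.trans hyM) hyM hm hmx
      gcongr
      exact geomArithRatio_monotoneOn hv hyx (hyx.trans hyxM) hyxM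

theorem concave_mono_geometric_extended (m₁ m₂ M₁ M₂ a b v : ℝ)
    (hm₂ : 0 < m₂) (h1 : m₂ ≤ a) (h2 : a ≤ m₁) (h3 : m₁ < M₁) (h4 : M₁ ≤ b) (h5 : b ≤ M₂)
    (hv : 1 ≤ v) (f : ℝ → ℝ)
    (hfpos : ∀ t ∈ Set.Ioi (0:ℝ), 0 < f t)
    (hinc : MonotoneOn f (Set.Ioi 0)) (hconc : ConcaveOn ℝ (Set.Ioi 0) f) :
    f (a ^ (1 - v) * b ^ v)
      ≤ f ((m₂ ^ (1 - v) * M₂ ^ v / ((1 - v) * m₂ + v * M₂)) * a) ^ (1 - v) *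
        f ((m₂ ^ (1 - v) * M₂ ^ v / ((1 - v) * m₂ + v * M₂)) * b) ^ v := by
  have ha : 0 < a := hm₂.trans_le h1
  have hab : a ≤ b := h2.trans (h3.le.trans h4)
  have hb : 0 < b := ha.trans_le hab
  set C := m₂ ^ (1 - v) * M₂ ^ v / ((1 - v) * m₂ + v * M₂)
  have hCratio : geomArithRatio v (M₂ / m₂) = C := geomArithRatio_div hm₂ (hb.le.trans h5) v
  have hC : 0 < C := hCratio ▸ geomArithRatio_pos (zero_le_one.trans hv)
    ((one_le_div hm₂).2 (h1.trans (hab.trans h5)))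
  have hCa : C * a ∈ Ioi 0 := mul_pos hC ha
  have hCb : C * b ∈ Ioi 0 := mul_pos hC hb
  have hmean : C * ((1 - v) * a + v * b) = (1 - v) • (C * a) + v • (C * b) := by
    simp only [smul_eq_mul]; ring
  have hsandwich : a ^ (1 - v) * b ^ v ≤ (1 - v) • (C * a) + v • (C * b) := by
    rw [← hmean, ← hCratio]
    exact rpow_one_sub_mul_rpow_le_geomArithRatio_mul hm₂ h1 hab h5 hv
  have hgeom : a ^ (1 - v) * b ^ v ∈ Ioi 0 :=
    mul_pos (rpow_pos_of_pos ha _) (rpow_pos_of_pos hb _)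
  calc f (a ^ (1 - v) * b ^ v) ≤ f ((1 - v) • (C * a) + v • (C * b)) :=
        hinc hgeom (hgeom.trans_le hsandwich) hsandwich
    _ ≤ (1 - v) * f (C * a) + v * f (C * b) :=
        hconc.le_sub_mul_add_mul_of_one_le hv hCa (hgeom.trans_le hsandwich)
    _ ≤ f (C * a) ^ (1 - v) * f (C * b) ^ v :=
        sub_mul_add_mul_le_rpow_mul_rpow (hfpos _ hCa) (hfpos _ hCb).le hv
end
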